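/- For every natural number d ≥ 1 and every point x in the hyperplane H_d = {x ∈ ℝ^(d+1) : x_1 + ... + x_(d+1) = 0}, the distance from x to the nearest point of the lattice A*_d is at most sqrt(d(d+2)/(12(d+1))). -/

import Mathlib

/-!
Put `n = d + 1` and `θ = Int.fract ∘ x`. For a threshold `t`, rounding `x i` down, or up when
`t ≤ θ i`, gives an integer vector `z` whose orthogonal projection onto `H_d` lies in `A*_d`, at
squared distance `∑ i j (w i - w j)² / (2n)` from `x`, where `w = x - z`. As `t` runs over
`(0, 1]`, the pair `(i, j)` contributes `|θ i - θ j| - (θ i - θ j)²` on average, so some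
threshold does at least as well as the average. For sorted `θ`,
`∑ i j |θ i - θ j| = 2 ∑ k c k θ k` with `c k = 2k + 1 - n`, and
`∑ i j (θ i - θ j)² = 2n ∑ k (θ k - θ̄)²`; completing the square then bounds the average by
`∑ k c k² / (2n) = (n² - 1) / 6`.
-/

open Finset MeasureTheory Set

/-- The hyperplane `H_d = {x ∈ ℝ^(d+1) : ∑ x_i = 0}`. -/
def hyperplaneH (d : ℕ) : Set (EuclideanSpace ℝ (Fin (d + 1))) :=
  {x | ∑ i, x i = 0}

/-- The permutohedral lattice `A*_d`: all points of `H_d` whose coordinate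
differences are integers. -/
def Astar (d : ℕ) : Set (EuclideanSpace ℝ (Fin (d + 1))) :=
  {x | x ∈ hyperplaneH d ∧ ∀ i j, ∃ k : ℤ, x i - x j = (k : ℝ)}

theorem sum_sum_sub_sq_eq {ι : Type*} [Fintype ι] (w : ι → ℝ) :
    ∑ i, ∑ j, (w i - w j) ^ 2 =
      2 * Fintype.card ι * ∑ i, (w i - (∑ j, w j) / Fintype.card ι) ^ 2 := by
  rcases isEmpty_or_nonempty ι with _ | _
  · simp
  have hn : (Fintype.card ι : ℝ) ≠ 0 := by positivity
  simp only [sub_sq, sum_add_distrib, sum_sub_distrib, sum_const, card_univ, nsmul_eq_mul,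
    ← mul_sum, ← sum_mul, div_pow]
  field_simp
  ring

theorem sum_range_two_mul_add_one_sub (n : ℕ) (m : ℝ) :
    ∑ k ∈ range n, (2 * (k : ℝ) + 1 - m) = n ^ 2 - n * m := by
  induction n with
  | zero => simp
  | succ n ih => rw [sum_range_succ, ih]; push_cast; ring

theorem sum_range_two_mul_add_one_sub_sq (n : ℕ) (m : ℝ) :
    ∑ k ∈ range n, (2 * (k : ℝ) + 1 - m) ^ 2 =
      n * (4 * n ^ 2 - 1) / 3 - 2 * m * n ^ 2 + n * m ^ 2 := by
  induction n with
  | zero => simp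
  | succ n ih => rw [sum_range_succ, ih]; push_cast; ring

theorem sum_sum_abs_sub_of_monotone : ∀ {n : ℕ} (φ : Fin n → ℝ), Monotone φ →
    ∑ i, ∑ j, |φ i - φ j| = 2 * ∑ k : Fin n, (2 * (k : ℝ) + 1 - n) * φ k
  | 0, _, _ => by simp
  | n + 1, φ, hφ => by
    have ih := sum_sum_abs_sub_of_monotone (φ ∘ Fin.castSucc)
      (hφ.comp Fin.strictMono_castSucc.monotone)
    have hlast (i : Fin n) : |φ (Fin.last n) - φ i.castSucc| = φ (Fin.last n) - φ i.castSucc :=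
      abs_of_nonneg (sub_nonneg.2 (hφ (Fin.le_last _)))
    have hcoeff (i : Fin n) : (2 * (i : ℝ) + 1 - (n + 1 : ℕ)) * φ i.castSucc =
        (2 * (i : ℝ) + 1 - n) * φ i.castSucc - φ i.castSucc := by push_cast; ring
    simp only [Function.comp_apply] at ih
    simp only [Fin.sum_univ_castSucc, sum_add_distrib, ih,
      abs_sub_comm (φ (Fin.castSucc _)) (φ (Fin.last n)), hlast, sub_self, abs_zero, add_zero,
      Fin.val_castSucc, Fin.val_last, sum_sub_distrib,
      sum_const, card_univ, Fintype.card_fin, nsmul_eq_mul, hcoeff]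
    push_cast
    ring

theorem sum_sum_abs_sub_sub_sq_le_of_monotone {n : ℕ} [NeZero n] {φ : Fin n → ℝ}
    (hφ : Monotone φ) : ∑ i, ∑ j, (|φ i - φ j| - (φ i - φ j) ^ 2) ≤ ((n : ℝ) ^ 2 - 1) / 6 := by
  set c : Fin n → ℝ := fun k => 2 * (k : ℝ) + 1 - n
  set u : Fin n → ℝ := fun k => φ k - (∑ j, φ j) / n
  have hn : (0 : ℝ) < n := Nat.cast_pos.2 (NeZero.pos n)
  have hc : ∑ k, c k = 0 := by
    rw [Fin.sum_univ_eq_sum_range (fun k => 2 * (k : ℝ) + 1 - n), sum_range_two_mul_add_one_sub]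
    ring
  have hc2 : ∑ k, c k ^ 2 = n * ((n : ℝ) ^ 2 - 1) / 3 := by
    rw [Fin.sum_univ_eq_sum_range (fun k => (2 * (k : ℝ) + 1 - n) ^ 2),
      sum_range_two_mul_add_one_sub_sq]
    ring
  have hcu : ∑ k, c k * φ k = ∑ k, c k * u k := by
    simp only [u, mul_sub, sum_sub_distrib, ← sum_mul, hc, zero_mul, sub_zero]
  calc ∑ i, ∑ j, (|φ i - φ j| - (φ i - φ j) ^ 2)
      = ∑ k, (2 * c k * u k - 2 * n * u k ^ 2) := by
        simp only [sum_sub_distrib]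
        rw [sum_sum_abs_sub_of_monotone φ hφ, sum_sum_sub_sq_eq, Fintype.card_fin]
        change 2 * ∑ k, c k * φ k - 2 * n * ∑ k, u k ^ 2 = _
        rw [hcu, mul_sum, mul_sum]
        simp only [mul_assoc]
    _ ≤ ∑ k, c k ^ 2 / (2 * n) := sum_le_sum fun k _ => by
        rw [le_div_iff₀ (by positivity)]
        nlinarith [sq_nonneg (c k - 2 * n * u k)]
    _ = ((n : ℝ) ^ 2 - 1) / 6 := by
        rw [← sum_div, hc2]
        field_simp
        ring

theorem sum_sum_abs_sub_sub_sq_le {n : ℕ} [NeZero n] (θ : Fin n → ℝ) :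
    ∑ i, ∑ j, (|θ i - θ j| - (θ i - θ j) ^ 2) ≤ ((n : ℝ) ^ 2 - 1) / 6 := by
  set σ := Tuple.sort θ
  calc ∑ i, ∑ j, (|θ i - θ j| - (θ i - θ j) ^ 2)
      = ∑ i, ∑ j, (|θ (σ i) - θ (σ j)| - (θ (σ i) - θ (σ j)) ^ 2) := by
        rw [← Equiv.sum_comp σ]
        exact sum_congr rfl fun i _ => (Equiv.sum_comp σ _).symm
    _ ≤ _ := sum_sum_abs_sub_sub_sq_le_of_monotone (Tuple.monotone_sort θ)

theorem intervalIntegrable_indicator_Iic (a c d : ℝ) :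
    IntervalIntegrable ((Iic a).indicator (1 : ℝ → ℝ)) volume c d :=
  ⟨(integrableOn_const (by simp)).indicator measurableSet_Iic,
    (integrableOn_const (by simp)).indicator measurableSet_Iic⟩

theorem intervalIntegral_indicator_Iic {a : ℝ} (ha : a ∈ Icc (0 : ℝ) 1) :
    ∫ t in (0 : ℝ)..1, (Iic a).indicator 1 t = a := by
  rw [← Iic_def, intervalIntegral.integral_indicator ha]
  simp

theorem exists_le_intervalIntegral {f : ℝ → ℝ} (hf : IntervalIntegrable f volume 0 1) :
    ∃ t, f t ≤ ∫ s in (0 : ℝ)..1, f s := by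
  have : IsProbabilityMeasure (volume.restrict (Ioc (0 : ℝ) 1)) := ⟨by simp⟩
  rw [intervalIntegral.integral_of_le zero_le_one]
  exact exists_le_integral hf.1

noncomputable def roundResidual (t a : ℝ) : ℝ := a - (Iic a).indicator 1 t

theorem sq_sub_roundResidual_of_le {a b : ℝ} (hab : a ≤ b) (t : ℝ) :
    (roundResidual t a - roundResidual t b) ^ 2 =
      (a - b) ^ 2 + (2 * (a - b) + 1) * ((Iic b).indicator 1 t - (Iic a).indicator 1 t) := by
  by_cases hta : t ≤ a
  · simp [roundResidual, hta, hta.trans hab]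
  · by_cases htb : t ≤ b <;> simp [roundResidual, hta, htb]; ring

theorem intervalIntegrable_sq_sub_roundResidual (a b : ℝ) :
    IntervalIntegrable (fun t => (roundResidual t a - roundResidual t b) ^ 2) volume 0 1 := by
  wlog hab : a ≤ b generalizing a b
  · simpa only [sub_sq_comm] using this b a (le_of_not_ge hab)
  simp only [sq_sub_roundResidual_of_le hab]
  exact intervalIntegrable_const.add (((intervalIntegrable_indicator_Iic b 0 1).sub
    (intervalIntegrable_indicator_Iic a 0 1)).const_mul _)

theorem integral_sq_sub_roundResidual {a b : ℝ} (ha : a ∈ Icc (0 : ℝ) 1)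
    (hb : b ∈ Icc (0 : ℝ) 1) :
    ∫ t in (0 : ℝ)..1, (roundResidual t a - roundResidual t b) ^ 2 = |a - b| - (a - b) ^ 2 := by
  wlog hab : a ≤ b generalizing a b
  · simpa only [sub_sq_comm, abs_sub_comm] using this hb ha (le_of_not_ge hab)
  simp only [sq_sub_roundResidual_of_le hab]
  rw [intervalIntegral.integral_add intervalIntegrable_const
      (((intervalIntegrable_indicator_Iic b 0 1).sub
        (intervalIntegrable_indicator_Iic a 0 1)).const_mul _),
    intervalIntegral.integral_const_mul, intervalIntegral.integral_sub
      (intervalIntegrable_indicator_Iic b 0 1) (intervalIntegrable_indicator_Iic a 0 1),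
    intervalIntegral_indicator_Iic ha, intervalIntegral_indicator_Iic hb,
    abs_of_nonpos (sub_nonpos.2 hab), intervalIntegral.integral_const]
  simp
  ring

theorem exists_sum_sum_sq_sub_roundResidual_le {ι : Type*} [Fintype ι] {θ : ι → ℝ}
    (hθ : ∀ i, θ i ∈ Icc (0 : ℝ) 1) :
    ∃ t, ∑ i, ∑ j, (roundResidual t (θ i) - roundResidual t (θ j)) ^ 2 ≤
      ∑ i, ∑ j, (|θ i - θ j| - (θ i - θ j) ^ 2) := by
  have hint (i : ι) : IntervalIntegrable
      (fun t => ∑ j, (roundResidual t (θ i) - roundResidual t (θ j)) ^ 2) volume 0 1 := by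
    simpa only [sum_fn] using
      IntervalIntegrable.sum univ fun j _ => intervalIntegrable_sq_sub_roundResidual (θ i) (θ j)
  obtain ⟨t, ht⟩ := exists_le_intervalIntegral
    (by simpa only [sum_fn] using IntervalIntegrable.sum univ fun i _ => hint i)
  refine ⟨t, ht.trans_eq ?_⟩
  rw [intervalIntegral.integral_finsetSum fun i _ => hint i]
  refine sum_congr rfl fun i _ => ?_
  rw [intervalIntegral.integral_finsetSum fun j _ => intervalIntegrable_sq_sub_roundResidual _ _]
  exact sum_congr rfl fun j _ => integral_sq_sub_roundResidual (hθ i) (hθ j)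

noncomputable def projHyperplaneH {d : ℕ} (z : Fin (d + 1) → ℝ) : EuclideanSpace ℝ (Fin (d + 1)) :=
  WithLp.toLp 2 fun i => z i - (∑ j, z j) / (d + 1)

theorem projHyperplaneH_mem_hyperplaneH {d : ℕ} (z : Fin (d + 1) → ℝ) :
    projHyperplaneH z ∈ hyperplaneH d := by
  change ∑ i, (z i - (∑ j, z j) / (d + 1)) = 0
  rw [sum_sub_distrib, sum_const, card_univ, Fintype.card_fin, nsmul_eq_mul]
  field_simp
  push_cast
  ring

theorem projHyperplaneH_intCast_mem_Astar {d : ℕ} (z : Fin (d + 1) → ℤ) :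
    projHyperplaneH (fun i => (z i : ℝ)) ∈ Astar d :=
  ⟨projHyperplaneH_mem_hyperplaneH _, fun i j => ⟨z i - z j, by simp [projHyperplaneH]⟩⟩

theorem dist_projHyperplaneH {d : ℕ} {x : EuclideanSpace ℝ (Fin (d + 1))} (hx : x ∈ hyperplaneH d)
    (z : Fin (d + 1) → ℝ) :
    dist x (projHyperplaneH z) = √((∑ i, ∑ j, (x i - z i - (x j - z j)) ^ 2) / (2 * (d + 1))) := by
  have hx : ∑ i, x i = 0 := hx
  rw [EuclideanSpace.dist_eq, sum_sum_sub_sq_eq, Fintype.card_fin, Nat.cast_add_one,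
    mul_div_cancel_left₀ _ (by positivity)]
  refine congrArg _ (sum_congr rfl fun i _ => ?_)
  rw [Real.dist_eq, sq_abs, sum_sub_distrib, hx]
  simp only [projHyperplaneH]
  ring

theorem covering_radius_upper_bound (d : ℕ)
    (x : EuclideanSpace ℝ (Fin (d + 1))) (hx : x ∈ hyperplaneH d) :
    Metric.infDist x (Astar d) ≤
      Real.sqrt ((d : ℝ) * ((d : ℝ) + 2) / (12 * ((d : ℝ) + 1))) := by
  obtain ⟨t, ht⟩ := exists_sum_sum_sq_sub_roundResidual_le (θ := fun i => Int.fract (x i))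
    fun i => ⟨Int.fract_nonneg _, (Int.fract_lt_one _).le⟩
  let z : Fin (d + 1) → ℤ := fun i => ⌊x i⌋ + if t ≤ Int.fract (x i) then 1 else 0
  have hz (i : Fin (d + 1)) : x i - z i = roundResidual t (Int.fract (x i)) := by
    rw [roundResidual, ← Int.self_sub_floor]
    by_cases h : t ≤ x i - ⌊x i⌋ <;> simp [z, h, ← Int.self_sub_floor, sub_add_eq_sub_sub]
  calc Metric.infDist x (Astar d) ≤ dist x (projHyperplaneH fun i => (z i : ℝ)) :=
        Metric.infDist_le_dist_of_mem (projHyperplaneH_intCast_mem_Astar z)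
    _ = √((∑ i, ∑ j, (x i - z i - (x j - z j)) ^ 2) / (2 * (d + 1))) := dist_projHyperplaneH hx _
    _ ≤ √((((d + 1 : ℕ) : ℝ) ^ 2 - 1) / 6 / (2 * (d + 1))) := by
        simp only [hz]
        gcongr
        exact ht.trans (sum_sum_abs_sub_sub_sq_le _)
    _ = √((d : ℝ) * ((d : ℝ) + 2) / (12 * ((d : ℝ) + 1))) := by
        push_cast
        congr 1
        field_simp
        ring
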